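/- arXiv:2004.03050 — 2 statements merged into one kernel-verified Lean document; each statement's English description precedes it below -/
import Mathlib

section
/- Let n ≥ 2, let α ≥ 0 be a real number, let (x_i^ng)_{i=1}^n be a nominal greedy profile for action sets S_1, …, S_n ⊆ S and budget k ≥ 1, and let Z̃_1, …, Z̃_{n−1} ⊆ S satisfy Δ(Z̃_i | x_1^ng ∪ … ∪ x_i^ng) ≤ α·Δ(x_i^ng | x_1^ng ∪ … ∪ x_{i−1}^ng) for every i ∈ {1, …, n−1}. Then Δ(Z̃_1 ∪ … ∪ Z̃_{n−1} | x_1^ng ∪ … ∪ x_n^ng) ≤ α·f(x_1^ng ∪ … ∪ x_n^ng). -/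
open Finset

variable {α : Type*}

/-- `f` is monotone on finsets. -/
def IsMonotoneFn (f : Finset α → ℝ) : Prop := ∀ A B : Finset α, A ⊆ B → f A ≤ f B

/-- `f` is submodular. -/
def IsSubmodularFn [DecidableEq α] (f : Finset α → ℝ) : Prop :=
  ∀ A B : Finset α, A ⊆ B → ∀ s ∉ B, f (insert s A) - f A ≥ f (insert s B) - f B

/-- Marginal contribution Δ(A|B) = f(A ∪ B) − f(B). -/
def marg [DecidableEq α] (f : Finset α → ℝ) (A B : Finset α) : ℝ := f (A ∪ B) - f B

/-- Δ^l(A|B): best marginal of a subset of `A` of size at most `l`. -/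
noncomputable def margSup [DecidableEq α] (f : Finset α → ℝ) (l : ℕ) (A B : Finset α) : ℝ :=
  (A.powerset.filter (fun C => C.card ≤ l)).sup' ⟨∅, by simp⟩ (fun C => marg f C B)

/-- Union of the first `i` sets: x_0 ∪ ⋯ ∪ x_{i-1}. -/
def pref [DecidableEq α] (x : ℕ → Finset α) (i : ℕ) : Finset α := (Finset.range i).biUnion x

/-- A nominal greedy profile. -/
def NomGreedy [DecidableEq α] (f : Finset α → ℝ) (Ss : ℕ → Finset α) (k n : ℕ)
    (x : ℕ → Finset α) : Prop :=
  ∀ i < n, x i ⊆ Ss i ∧ (x i).card ≤ k ∧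
    ∀ c : Finset α, c ⊆ Ss i → c.card ≤ k → f (c ∪ pref x i) ≤ f (x i ∪ pref x i)

/-- An augmented greedy profile. -/
def AugGreedy [DecidableEq α] (f : Finset α → ℝ) (Ss : ℕ → Finset α) (k m n : ℕ)
    (x z : ℕ → Finset α) : Prop :=
  ∀ i < n,
    (x i ⊆ Ss i ∪ pref z i ∧ (x i).card ≤ k ∧
      ∀ c : Finset α, c ⊆ Ss i ∪ pref z i → c.card ≤ k →
        f (c ∪ pref x i) ≤ f (x i ∪ pref x i)) ∧
    ∃ zk zr : Finset α,
      z i = zk ∪ zr ∧ zk ⊆ Ss i ∧ zk.card ≤ min k m ∧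
      (∀ w : Finset α, w ⊆ Ss i → w.card ≤ min k m →
        marg f w (pref x (i + 1)) ≤ marg f zk (pref x (i + 1))) ∧
      zr ⊆ Ss i ∧ zr.card ≤ m - k

/-- The optimal value OPT(f, (S_i), k) over feasible profiles with n agents. -/
noncomputable def OPTval [DecidableEq α] [Fintype α] (f : Finset α → ℝ) (Ss : ℕ → Finset α)
    (n k : ℕ) : ℝ :=
  ((Finset.univ : Finset (Fin n → Finset α)).filter
      (fun y => ∀ i : Fin n, y i ⊆ Ss (i : ℕ) ∧ (y i).card ≤ k)).sup'
    ⟨(fun _ => ∅), by simp⟩ (fun y => f (Finset.univ.biUnion (fun i => y i)))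

lemma marg_mono_right' [DecidableEq α] {f : Finset α → ℝ} (hmono : IsMonotoneFn f)
    (hsub : IsSubmodularFn f) (A : Finset α) {B B' : Finset α} (h : B ⊆ B') :
    marg f A B' ≤ marg f A B := by
  induction A using Finset.induction_on with
  | empty => simp [marg]
  | @insert s A _ ih =>
    have key : f (insert s (A ∪ B')) - f (A ∪ B') ≤ f (insert s (A ∪ B)) - f (A ∪ B) := by
      by_cases hs : s ∈ A ∪ B'
      · rw [Finset.insert_eq_self.2 hs]
        have := hmono (A ∪ B) (insert s (A ∪ B)) (Finset.subset_insert _ _)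
        linarith
      · exact hsub (A ∪ B) (A ∪ B') (Finset.union_subset_union_right h) s hs
    simp only [marg, Finset.insert_union] at *
    linarith

lemma marg_union_le' [DecidableEq α] {f : Finset α → ℝ} (hmono : IsMonotoneFn f)
    (hsub : IsSubmodularFn f) (A B C : Finset α) :
    marg f (A ∪ B) C ≤ marg f A C + marg f B C := by
  have h1 : marg f A (B ∪ C) ≤ marg f A C :=
    marg_mono_right' hmono hsub A Finset.subset_union_right
  simp only [marg, ← Finset.union_assoc] at *
  linarith

lemma pref_subset' [DecidableEq α] (x : ℕ → Finset α) {i j : ℕ} (h : i ≤ j) :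
    pref x i ⊆ pref x j :=
  Finset.biUnion_subset_biUnion_of_subset_left _ (Finset.range_subset_range.2 h)

lemma pref_succ' [DecidableEq α] (x : ℕ → Finset α) (i : ℕ) :
    pref x (i + 1) = x i ∪ pref x i := by
  simp [pref, Finset.range_add_one]

/-- Second chain of inequalities in the proof of Theorem 2. -/
theorem stmt10 [DecidableEq α] [Fintype α] (f : Finset α → ℝ)
    (hnorm : f ∅ = 0) (hmono : IsMonotoneFn f) (hsub : IsSubmodularFn f)
    (n k : ℕ) (hn : 2 ≤ n) (hk : 1 ≤ k) (a : ℝ) (ha : 0 ≤ a)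
    (Ss xng : ℕ → Finset α) (hng : NomGreedy f Ss k n xng)
    (Z : ℕ → Finset α)
    (hZ : ∀ i < n - 1, marg f (Z i) (pref xng (i + 1)) ≤ a * marg f (xng i) (pref xng i)) :
    marg f (pref Z (n - 1)) (pref xng n) ≤ a * f (pref xng n) := by
  have key : ∀ m ≤ n - 1, marg f (pref Z m) (pref xng n) ≤ a * f (pref xng m) := by
    intro m hm
    induction m with
    | zero => simp [pref, marg, hnorm]
    | succ m ih =>
      have hm' : m < n - 1 := hm
      have h1 : marg f (pref Z (m + 1)) (pref xng n) ≤
          marg f (Z m) (pref xng n) + marg f (pref Z m) (pref xng n) := by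
        rw [pref_succ']
        exact marg_union_le' hmono hsub _ _ _
      have h2 : marg f (Z m) (pref xng n) ≤ marg f (Z m) (pref xng (m + 1)) :=
        marg_mono_right' hmono hsub _ (pref_subset' xng (by omega))
      have h3 := hZ m hm'
      have h4 := ih (le_of_lt hm')
      have h5 : marg f (xng m) (pref xng m) = f (pref xng (m + 1)) - f (pref xng m) := by
        rw [pref_succ']; rfl
      rw [h5] at h3
      linarith
  have h6 := key (n - 1) le_rfl
  have h7 : f (pref xng (n - 1)) ≤ f (pref xng n) :=
    hmono _ _ (pref_subset' xng (by omega))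
  nlinarith
end

section
/- Let k and m be integers with 1 ≤ m ≤ k, let B ⊆ S, let S' ⊆ S, and suppose X ⊆ S' with |X| ≤ k maximizes Δ(·|B) among all subsets of S' of cardinality at most k. Then for every Z ⊆ S' with |Z| ≤ m, it holds that Δ(Z | B ∪ X) ≤ (m/k)·Δ(X|B). -/
/-!
If `|X| < k`, adding any `z ∈ S'` to `X` stays feasible, so maximality gives `Δ(z | B ∪ X) ≤ 0`.
If `|X| = k`, swapping any `x ∈ X` for `z` stays feasible, so by maximality and diminishing
returns `Δ(z | B ∪ X) ≤ Δ(x | B ∪ X \ x)`; these last marginals sum to at most `Δ(X | B)`,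
whence `k · Δ(z | B ∪ X) ≤ Δ(X | B)`. Subadditivity over the at most `m` elements of `Z`
concludes.
-/

open Finset

variable {α : Type*}

section Marginals

variable [DecidableEq α] {f : Finset α → ℝ}

lemma marg_nonneg (hmono : IsMonotoneFn f) (A B : Finset α) : 0 ≤ marg f A B :=
  sub_nonneg.mpr (hmono _ _ subset_union_right)

lemma marg_union (A C B : Finset α) : marg f (A ∪ C) B = marg f A (B ∪ C) + marg f C B := by
  simp only [marg, union_assoc, union_comm C B]
  ring

lemma marg_insert (s : α) (A B : Finset α) :
    marg f (insert s A) B = marg f {s} (B ∪ A) + marg f A B := by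
  rw [insert_eq, marg_union]

lemma marg_singleton_anti (hmono : IsMonotoneFn f) (hsub : IsSubmodularFn f) (s : α)
    {C D : Finset α} (hDC : D ⊆ C) : marg f {s} C ≤ marg f {s} D := by
  by_cases hs : s ∈ C
  · rw [marg, singleton_union, insert_eq_of_mem hs, sub_self]
    exact marg_nonneg hmono _ _
  · simpa only [marg, singleton_union] using hsub D C hDC s hs

lemma marg_anti (hmono : IsMonotoneFn f) (hsub : IsSubmodularFn f) (A : Finset α)
    {C D : Finset α} (hDC : D ⊆ C) : marg f A C ≤ marg f A D := by
  induction A using Finset.induction with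
  | empty => simp [marg]
  | insert s A _ ih =>
    rw [marg_insert, marg_insert]
    exact add_le_add (marg_singleton_anti hmono hsub s (union_subset_union_left hDC)) ih

lemma marg_le_sum_marg_singleton (hmono : IsMonotoneFn f) (hsub : IsSubmodularFn f)
    (Z T : Finset α) : marg f Z T ≤ ∑ z ∈ Z, marg f {z} T := by
  induction Z using Finset.induction with
  | empty => simp [marg]
  | insert z Z hz ih =>
    rw [sum_insert hz, marg_insert]
    exact add_le_add (marg_singleton_anti hmono hsub z subset_union_left) ih

lemma sum_marg_singleton_erase_le (hmono : IsMonotoneFn f) (hsub : IsSubmodularFn f)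
    (X B : Finset α) : ∑ x ∈ X, marg f {x} (B ∪ X.erase x) ≤ marg f X B := by
  induction X using Finset.induction with
  | empty => simp [marg]
  | insert a X ha ih =>
    rw [sum_insert ha, erase_insert ha, marg_insert]
    refine add_le_add le_rfl (le_trans (sum_le_sum fun x _ => ?_) ih)
    exact marg_anti hmono hsub _ (union_subset_union_right
      (erase_subset_erase _ (subset_insert _ _)))

end Marginals

section Maximizer

variable [DecidableEq α] {f : Finset α → ℝ} {k : ℕ} {B S' X : Finset α}

lemma marg_singleton_le_marg_singleton_erase (hmono : IsMonotoneFn f)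
    (hsub : IsSubmodularFn f) (hX : X ⊆ S') (hXcard : X.card ≤ k)
    (hXmax : ∀ W ⊆ S', W.card ≤ k → marg f W B ≤ marg f X B)
    {x z : α} (hx : x ∈ X) (hz : z ∈ S') :
    marg f {z} (B ∪ X) ≤ marg f {x} (B ∪ X.erase x) := by
  have hswap : marg f (insert z (X.erase x)) B ≤ marg f (insert x (X.erase x)) B := by
    rw [insert_erase hx]
    refine hXmax _ (insert_subset hz ((erase_subset x X).trans hX)) ?_
    have := card_erase_add_one hx
    have := card_insert_le z (X.erase x)
    omega
  rw [marg_insert, marg_insert] at hswap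
  calc marg f {z} (B ∪ X)
      ≤ marg f {z} (B ∪ X.erase x) :=
        marg_singleton_anti hmono hsub z (union_subset_union_right (erase_subset x X))
    _ ≤ marg f {x} (B ∪ X.erase x) := by linarith

lemma marg_singleton_nonpos_of_card_lt (hX : X ⊆ S') (hXcard : X.card < k)
    (hXmax : ∀ W ⊆ S', W.card ≤ k → marg f W B ≤ marg f X B) {z : α} (hz : z ∈ S') :
    marg f {z} (B ∪ X) ≤ 0 := by
  have := hXmax (insert z X) (insert_subset hz hX) ((card_insert_le z X).trans hXcard)
  rw [marg_insert] at this
  linarith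

lemma card_mul_marg_singleton_le (hmono : IsMonotoneFn f) (hsub : IsSubmodularFn f)
    (hX : X ⊆ S') (hXcard : X.card ≤ k)
    (hXmax : ∀ W ⊆ S', W.card ≤ k → marg f W B ≤ marg f X B) {z : α} (hz : z ∈ S') :
    (k : ℝ) * marg f {z} (B ∪ X) ≤ marg f X B := by
  rcases hXcard.lt_or_eq with hlt | rfl
  · have := marg_singleton_nonpos_of_card_lt hX hlt hXmax hz
    nlinarith [marg_nonneg hmono X B]
  · calc (X.card : ℝ) * marg f {z} (B ∪ X)
        = ∑ _x ∈ X, marg f {z} (B ∪ X) := by rw [sum_const, nsmul_eq_mul]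
      _ ≤ ∑ x ∈ X, marg f {x} (B ∪ X.erase x) := sum_le_sum fun x hx =>
          marg_singleton_le_marg_singleton_erase hmono hsub hX le_rfl hXmax hx hz
      _ ≤ marg f X B := sum_marg_singleton_erase_le hmono hsub X B

end Maximizer

theorem stmt11_general [DecidableEq α] (f : Finset α → ℝ)
    (hmono : IsMonotoneFn f) (hsub : IsSubmodularFn f)
    (k m : ℕ) (hm : 1 ≤ m) (hmk : m ≤ k) (B S' X : Finset α)
    (hX : X ⊆ S') (hXcard : X.card ≤ k)
    (hXmax : ∀ W ⊆ S', W.card ≤ k → marg f W B ≤ marg f X B)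
    (Z : Finset α) (hZ : Z ⊆ S') (hZcard : Z.card ≤ m) :
    marg f Z (B ∪ X) ≤ ((m : ℝ) / k) * marg f X B := by
  have hk : (0 : ℝ) < k := by exact_mod_cast hm.trans hmk
  have hZm : (Z.card : ℝ) ≤ m := by exact_mod_cast hZcard
  rw [div_mul_eq_mul_div, le_div_iff₀ hk]
  calc marg f Z (B ∪ X) * k
      ≤ (∑ z ∈ Z, marg f {z} (B ∪ X)) * k :=
        mul_le_mul_of_nonneg_right (marg_le_sum_marg_singleton hmono hsub Z _) hk.le
    _ = ∑ z ∈ Z, (k : ℝ) * marg f {z} (B ∪ X) := by rw [sum_mul]; simp only [mul_comm]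
    _ ≤ ∑ _z ∈ Z, marg f X B :=
        sum_le_sum fun z hz => card_mul_marg_singleton_le hmono hsub hX hXcard hXmax (hZ hz)
    _ = Z.card * marg f X B := by rw [sum_const, nsmul_eq_mul]
    _ ≤ m * marg f X B := mul_le_mul_of_nonneg_right hZm (marg_nonneg hmono X B)

/-- Case m ≤ k in the proof of Theorem 2: the leftover marginal of any message of size at
most `m` beyond a greedily chosen `X` is at most an m/k fraction of Δ(X|B). -/
theorem stmt11 [DecidableEq α] [Fintype α] (f : Finset α → ℝ)
    (hnorm : f ∅ = 0) (hmono : IsMonotoneFn f) (hsub : IsSubmodularFn f)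
    (k m : ℕ) (hm : 1 ≤ m) (hmk : m ≤ k) (B S' X : Finset α)
    (hX : X ⊆ S') (hXcard : X.card ≤ k)
    (hXmax : ∀ W ⊆ S', W.card ≤ k → marg f W B ≤ marg f X B)
    (Z : Finset α) (hZ : Z ⊆ S') (hZcard : Z.card ≤ m) :
    marg f Z (B ∪ X) ≤ ((m : ℝ) / k) * marg f X B :=
  stmt11_general f hmono hsub k m hm hmk B S' X hX hXcard hXmax Z hZ hZcard
end
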